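/- arXiv:1808.05412 — 11 statements merged into one kernel-verified Lean document; each statement's English description precedes it below -/
import Mathlib

section
/- Define L := I − (M_Po e₁ e₁ᵀ) / (e₁ᵀ M_Po e₁ + b/m), where I is the p×p identity matrix. Then: (i) M = (a/b)·L·M_Po = (a/b)·M_Po·Lᵀ; (ii) det(L) = (b/m) / (e₁ᵀ M_Po e₁ + b/m) ≠ 0, so L is invertible; and (iii) L = I − (m/a)·M e₁ e₁ᵀ. -/
/-! With `P = M_Po e₁ e₁ᵀ`, `q = e₁ᵀ M_Po e₁` and `c = q + b/m` one has `P² = q P`, so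
`L P = (1 - q / c) P = ((b/m) / c) P`, whence `M e₁ e₁ᵀ = (a/b) L P = (a/m) c⁻¹ P`: this is (iii).
The determinant in (ii) is `1 - q / c` by the matrix determinant lemma
`det (1 + u vᵀ) = 1 + vᵀ u`, and (i) is distributivity together with the symmetry of `M_Po`. -/

open Matrix

namespace Matrix

variable {n R : Type*} [Fintype n] [CommRing R]

theorem mul_vecMulVec_mul_self (A : Matrix n n R) (u v : n → R) :
    A * vecMulVec u v * (A * vecMulVec u v) = (v ⬝ᵥ A *ᵥ u) • (A * vecMulVec u v) := by
  rw [mul_vecMulVec, vecMulVec_mul_vecMulVec, vecMulVec_smul]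

theorem one_sub_smul_mul_vecMulVec_mul [DecidableEq n] (s : R) (A : Matrix n n R) (u v : n → R) :
    (1 - s • (A * vecMulVec u v)) * (A * vecMulVec u v) =
      (1 - s * (v ⬝ᵥ A *ᵥ u)) • (A * vecMulVec u v) := by
  rw [sub_mul, one_mul, smul_mul, mul_vecMulVec_mul_self, smul_smul, sub_smul, one_smul]

theorem transpose_one_sub_smul_mul_vecMulVec [DecidableEq n] (s : R) (A : Matrix n n R)
    (u v : n → R) :
    (1 - s • (A * vecMulVec u v))ᵀ = 1 - s • (vecMulVec v u * Aᵀ) := by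
  rw [transpose_sub, transpose_one, transpose_smul, transpose_mul, transpose_vecMulVec]

theorem det_one_add_vecMulVec [DecidableEq n] (u v : n → R) :
    det (1 + vecMulVec u v) = 1 + v ⬝ᵥ u := by
  rw [vecMulVec_eq Unit, det_one_add_replicateCol_mul_replicateRow]

theorem det_one_sub_smul_mul_vecMulVec [DecidableEq n] (s : R) (A : Matrix n n R)
    (u v : n → R) :
    det (1 - s • (A * vecMulVec u v)) = 1 - s * (v ⬝ᵥ A *ᵥ u) := by
  rw [mul_vecMulVec, ← smul_vecMulVec, sub_eq_add_neg, ← neg_vecMulVec, det_one_add_vecMulVec,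
    dotProduct_neg, dotProduct_smul, smul_eq_mul, sub_eq_add_neg]

end Matrix

theorem L_matrix_properties_general
    (a b m : ℝ) (ha : 0 < a) (hb : 0 < b) (hm : 0 < m)
    (p : ℕ)
    (e1 : Fin p → ℝ)
    (MPo : Matrix (Fin p) (Fin p) ℝ) (hMPo : MPo.PosSemidef)
    (M : Matrix (Fin p) (Fin p) ℝ)
    (hM : M = (a / b) • (MPo -
      (e1 ⬝ᵥ (MPo *ᵥ e1) + b / m)⁻¹ •
        (MPo * Matrix.vecMulVec e1 e1 * MPo)))
    (L : Matrix (Fin p) (Fin p) ℝ)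
    (hL : L = 1 - (e1 ⬝ᵥ (MPo *ᵥ e1) + b / m)⁻¹ • (MPo * Matrix.vecMulVec e1 e1)) :
    M = (a / b) • (L * MPo) ∧
    M = (a / b) • (MPo * Lᵀ) ∧
    L.det = (b / m) / (e1 ⬝ᵥ (MPo *ᵥ e1) + b / m) ∧
    L.det ≠ 0 ∧ IsUnit L ∧
    L = 1 - (m / a) • (M * Matrix.vecMulVec e1 e1) := by
  set q := e1 ⬝ᵥ (MPo *ᵥ e1)
  have hc : 0 < q + b / m :=
    add_pos_of_nonneg_of_pos (hMPo.dotProduct_mulVec_nonneg e1) (div_pos hb hm)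
  have hfrac : 1 - (q + b / m)⁻¹ * q = (b / m) / (q + b / m) := by
    rw [eq_div_iff hc.ne', sub_mul, one_mul, mul_comm, mul_inv_cancel_left₀ hc.ne']
    ring
  have hsymm : MPo.IsSymm := by simpa using hMPo.isHermitian
  have hLA : M = (a / b) • (L * MPo) := by
    rw [hM, hL, sub_mul, one_mul, smul_mul, mul_assoc]
  have hAL : M = (a / b) • (MPo * Lᵀ) := by
    rw [hM, hL, transpose_one_sub_smul_mul_vecMulVec, hsymm.eq, mul_sub, mul_one,
      Matrix.mul_smul, mul_assoc]
  have hdet : L.det = (b / m) / (q + b / m) := by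
    rw [hL, det_one_sub_smul_mul_vecMulVec, hfrac]
  have hdet0 : L.det ≠ 0 := hdet ▸ div_ne_zero (div_pos hb hm).ne' hc.ne'
  have hME : M * vecMulVec e1 e1 =
      (a / b * ((b / m) / (q + b / m))) • (MPo * vecMulVec e1 e1) := by
    rw [hLA, smul_mul, mul_assoc, hL, one_sub_smul_mul_vecMulVec_mul, smul_smul, hfrac]
  refine ⟨hLA, hAL, hdet, hdet0, (isUnit_iff_isUnit_det L).2 hdet0.isUnit, ?_⟩
  rw [hME, hL, smul_smul]
  congr 2
  field_simp

/-- Properties of the matrix `L = I − (M_Po e₁ e₁ᵀ)/(e₁ᵀ M_Po e₁ + b/m)`: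
(i) `M = (a/b)·L·M_Po = (a/b)·M_Po·Lᵀ`; (ii) `det L = (b/m)/(e₁ᵀ M_Po e₁ + b/m) ≠ 0`,
so `L` is invertible; (iii) `L = I − (m/a)·M e₁ e₁ᵀ`. -/
theorem L_matrix_properties
    (a b m : ℝ) (ha : 0 < a) (hb : 0 < b) (hm : 0 < m)
    (p : ℕ) (hp : 1 ≤ p)
    (e1 : Fin p → ℝ) (he1 : e1 = fun i : Fin p => if (i : ℕ) = 0 then (1:ℝ) else 0)
    (MPo : Matrix (Fin p) (Fin p) ℝ) (hMPo : MPo.PosSemidef)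
    (M : Matrix (Fin p) (Fin p) ℝ)
    (hM : M = (a / b) • (MPo -
      (e1 ⬝ᵥ (MPo *ᵥ e1) + b / m)⁻¹ •
        (MPo * Matrix.vecMulVec e1 e1 * MPo)))
    (L : Matrix (Fin p) (Fin p) ℝ)
    (hL : L = 1 - (e1 ⬝ᵥ (MPo *ᵥ e1) + b / m)⁻¹ • (MPo * Matrix.vecMulVec e1 e1)) :
    M = (a / b) • (L * MPo) ∧
    M = (a / b) • (MPo * Lᵀ) ∧
    L.det = (b / m) / (e1 ⬝ᵥ (MPo *ᵥ e1) + b / m) ∧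
    L.det ≠ 0 ∧ IsUnit L ∧
    L = 1 - (m / a) • (M * Matrix.vecMulVec e1 e1) :=
  L_matrix_properties_general a b m ha hb hm p e1 MPo hMPo M hM L hL
end

section
/- The information matrices M of the Poisson-Gamma model and M_Po of the Poisson model have the same rank: rank(M) = rank(M_Po). -/
open Matrix

/-!
Since `M_Po e₁ e₁ᵀ M_Po = M_Po (e₁ (e₁ᵀ M_Po))`, the matrix `M` factors as
`(a/b) M_Po (1 - c⁻¹ e₁ e₁ᵀ M_Po)` with `c = e₁ᵀ M_Po e₁ + b/m`. By the matrix determinant lemma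
the last factor has determinant `1 - c⁻¹ e₁ᵀ M_Po e₁ = (b/m)/c ≠ 0`, so multiplying by it, like
scaling by `a/b ≠ 0`, preserves rank.
-/

namespace Matrix

variable {n R : Type*} [Fintype n] [DecidableEq n] [CommRing R]

theorem det_one_sub_vecMulVec (u v : n → R) : (1 - vecMulVec u v).det = 1 - v ⬝ᵥ u := by
  rw [sub_eq_add_neg, ← neg_vecMulVec, vecMulVec_eq Unit,
    det_one_add_replicateCol_mul_replicateRow, dotProduct_neg, ← sub_eq_add_neg]

theorem rank_mul_one_sub_vecMulVec {m : Type*} (A : Matrix m n R) (u v : n → R)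
    (h : IsUnit (1 - v ⬝ᵥ u)) : (A * (1 - vecMulVec u v)).rank = A.rank :=
  rank_mul_eq_left_of_isUnit_det _ A (by rwa [det_one_sub_vecMulVec])

theorem rank_sub_smul_mul_vecMulVec_mul (A : Matrix n n R) (u v : n → R) (c : R)
    (h : IsUnit (1 - c * (v ⬝ᵥ A *ᵥ u))) :
    (A - c • (A * vecMulVec u v * A)).rank = A.rank := by
  have hfactor : A - c • (A * vecMulVec u v * A) = A * (1 - vecMulVec u (c • (v ᵥ* A))) := by
    rw [Matrix.mul_assoc, vecMulVec_mul, Matrix.mul_sub, Matrix.mul_one, vecMulVec_smul,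
      Matrix.mul_smul]
  rw [hfactor, rank_mul_one_sub_vecMulVec]
  rwa [smul_dotProduct, ← dotProduct_mulVec, smul_eq_mul]

end Matrix

theorem one_sub_inv_add_mul_ne_zero {K : Type*} [Field K] {q d : K} (hd : d ≠ 0) :
    1 - (q + d)⁻¹ * q ≠ 0 := by
  by_cases hqd : q + d = 0
  · simp [hqd]
  · rw [inv_mul_eq_div, one_sub_div hqd, add_sub_cancel_left]
    exact div_ne_zero hd hqd

theorem rank_poisson_gamma_eq_rank_poisson_general
    (a b m : ℝ) (ha : 0 < a) (hb : 0 < b) (hm : 0 < m)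
    (p : ℕ)
    (e1 : Fin p → ℝ)
    (MPo : Matrix (Fin p) (Fin p) ℝ)
    (M : Matrix (Fin p) (Fin p) ℝ)
    (hM : M = (a / b) • (MPo -
      (e1 ⬝ᵥ (MPo *ᵥ e1) + b / m)⁻¹ •
        (MPo * Matrix.vecMulVec e1 e1 * MPo))) :
    M.rank = MPo.rank := by
  have hscale : a / b ∈ nonZeroDivisors ℝ := mem_nonZeroDivisors_of_ne_zero (by positivity)
  have hupdate : IsUnit (1 - (e1 ⬝ᵥ MPo *ᵥ e1 + b / m)⁻¹ * (e1 ⬝ᵥ MPo *ᵥ e1)) :=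
    isUnit_iff_ne_zero.2 (one_sub_inv_add_mul_ne_zero (by positivity))
  rw [hM, rank_smul_of_mem_nonZeroDivisors _ hscale,
    rank_sub_smul_mul_vecMulVec_mul _ _ _ _ hupdate]

/-- The information matrices of the Poisson-Gamma model and of the Poisson model have
the same rank. -/
theorem rank_poisson_gamma_eq_rank_poisson
    (a b m : ℝ) (ha : 0 < a) (hb : 0 < b) (hm : 0 < m)
    (p : ℕ) (hp : 1 ≤ p)
    (e1 : Fin p → ℝ) (he1 : e1 = fun i : Fin p => if (i : ℕ) = 0 then (1:ℝ) else 0)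
    (MPo : Matrix (Fin p) (Fin p) ℝ) (hMPo : MPo.PosSemidef)
    (M : Matrix (Fin p) (Fin p) ℝ)
    (hM : M = (a / b) • (MPo -
      (e1 ⬝ᵥ (MPo *ᵥ e1) + b / m)⁻¹ •
        (MPo * Matrix.vecMulVec e1 e1 * MPo))) :
    M.rank = MPo.rank :=
  rank_poisson_gamma_eq_rank_poisson_general a b m ha hb hm p e1 MPo M hM
end

section
/- Let A be a p×s real matrix with rank(A) = s ≤ p. Then there exists a p×s real matrix H with A = M·H if and only if there exists a p×s real matrix H' with A = M_Po·H'. (That is, the linear combinations Aᵀβ are identifiable in the Poisson-Gamma model if and only if they are identifiable in the Poisson model.) -/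
/-! Write `c = e₁ᵀ M_Po e₁ + b/m`. Then `M = M_Po · U` with
`U = (a/b) • (1 - c⁻¹ • e₁ (e₁ᵀ M_Po))`, and a rank-one perturbation `1 - r • u wᵀ` is invertible
whenever `r (wᵀu) ≠ 1` (Sherman–Morrison). Here `c - e₁ᵀ M_Po e₁ = b/m ≠ 0`, so `U` is invertible and
`M`, `M_Po` have the same column space. -/

open Matrix

namespace Matrix

variable {n o R K : Type*} [Fintype n] [DecidableEq n]

theorem exists_eq_mul_mul_iff_of_isUnit [Semiring R] {P U : Matrix n n R} (hU : IsUnit U)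
    (A : Matrix n o R) : (∃ H : Matrix n o R, A = P * U * H) ↔ ∃ H : Matrix n o R, A = P * H := by
  obtain ⟨u, rfl⟩ := hU
  constructor
  · rintro ⟨H, rfl⟩
    exact ⟨(u : Matrix n n R) * H, Matrix.mul_assoc _ _ _⟩
  · rintro ⟨H, rfl⟩
    refine ⟨(↑u⁻¹ : Matrix n n R) * H, ?_⟩
    rw [Matrix.mul_assoc, ← Matrix.mul_assoc (u : Matrix n n R), Units.mul_inv, Matrix.one_mul]

theorem isUnit_one_sub_smul_vecMulVec [Field K] {r : K} {u w : n → K} (h : r * (w ⬝ᵥ u) ≠ 1) :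
    IsUnit (1 - r • vecMulVec u w) := by
  set t := w ⬝ᵥ u
  set X := vecMulVec u w
  have hsq : X * X = t • X := by rw [vecMulVec_mul_vecMulVec, vecMulVec_smul]
  set k := (1 - r * t)⁻¹ * r
  have hk : k - r - r * k * t = 0 := by
    have h' : 1 - r * t ≠ 0 := sub_ne_zero.2 h.symm
    simp only [k]
    field_simp
    ring
  refine IsUnit.of_mul_eq_one (1 + k • X) ?_
  calc (1 - r • X) * (1 + k • X) = 1 + (k - r - r * k * t) • X := by
        rw [Matrix.sub_mul, Matrix.one_mul, Matrix.mul_add, Matrix.mul_one, smul_mul_smul_comm, hsq]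
        module
    _ = 1 := by rw [hk, zero_smul, add_zero]

end Matrix

theorem identifiability_equivalence_general
    (a b m : ℝ) (ha : 0 < a) (hb : 0 < b) (hm : 0 < m)
    (p : ℕ)
    (e1 : Fin p → ℝ)
    (MPo : Matrix (Fin p) (Fin p) ℝ)
    (M : Matrix (Fin p) (Fin p) ℝ)
    (hM : M = (a / b) • (MPo -
      (e1 ⬝ᵥ (MPo *ᵥ e1) + b / m)⁻¹ •
        (MPo * Matrix.vecMulVec e1 e1 * MPo)))
    (s : ℕ)
    (A : Matrix (Fin p) (Fin s) ℝ) :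
    (∃ H : Matrix (Fin p) (Fin s) ℝ, A = M * H) ↔
    (∃ H' : Matrix (Fin p) (Fin s) ℝ, A = MPo * H') := by
  set c := e1 ⬝ᵥ (MPo *ᵥ e1) + b / m
  have hM' : M = MPo * ((a / b) • (1 - c⁻¹ • vecMulVec e1 (e1 ᵥ* MPo))) := by
    rw [hM, Matrix.mul_assoc, vecMulVec_mul, Matrix.mul_smul, Matrix.mul_sub, Matrix.mul_one,
      Matrix.mul_smul]
  have h_ne_one : c⁻¹ * ((e1 ᵥ* MPo) ⬝ᵥ e1) ≠ 1 := by
    rw [← dotProduct_mulVec]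
    intro h
    have hc : c ≠ 0 := by rintro hc; simp [hc] at h
    have := (inv_mul_eq_one₀ hc).1 h
    simp only [c, add_eq_left] at this
    exact (div_pos hb hm).ne' this
  have hU : IsUnit ((a / b) • (1 - c⁻¹ • vecMulVec e1 (e1 ᵥ* MPo))) :=
    (isUnit_one_sub_smul_vecMulVec h_ne_one).smul (Units.mk0 (a / b) (by positivity))
  rw [hM']
  exact exists_eq_mul_mul_iff_of_isUnit hU A

/-- Identifiability of `Aᵀβ` is equivalent in the Poisson-Gamma and the Poisson model:
`A = M·H` for some `H` iff `A = M_Po·H'` for some `H'`. -/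
theorem identifiability_equivalence
    (a b m : ℝ) (ha : 0 < a) (hb : 0 < b) (hm : 0 < m)
    (p : ℕ) (hp : 1 ≤ p)
    (e1 : Fin p → ℝ) (he1 : e1 = fun i : Fin p => if (i : ℕ) = 0 then (1:ℝ) else 0)
    (MPo : Matrix (Fin p) (Fin p) ℝ) (hMPo : MPo.PosSemidef)
    (M : Matrix (Fin p) (Fin p) ℝ)
    (hM : M = (a / b) • (MPo -
      (e1 ⬝ᵥ (MPo *ᵥ e1) + b / m)⁻¹ •
        (MPo * Matrix.vecMulVec e1 e1 * MPo)))
    (s : ℕ) (hs : s ≤ p)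
    (A : Matrix (Fin p) (Fin s) ℝ) (hrank : A.rank = s) :
    (∃ H : Matrix (Fin p) (Fin s) ℝ, A = M * H) ↔
    (∃ H' : Matrix (Fin p) (Fin s) ℝ, A = MPo * H') :=
  identifiability_equivalence_general a b m ha hb hm p e1 MPo M hM s A
end

section
/- For any p×p real matrix G, the matrix (b/a)·G + (m/a)·e₁e₁ᵀ is a generalized inverse of M (i.e. M·((b/a)·G + (m/a)·e₁e₁ᵀ)·M = M) if and only if G is a generalized inverse of M_Po (i.e. M_Po·G·M_Po = M_Po). -/
open Matrix

/-!
With `E = e₁e₁ᵀ`, `s = e₁ᵀ M_Po e₁` and `β = b/m`, the matrix `M` is `(a/b) N` with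
`N = M_Po - (s + β)⁻¹ M_Po E M_Po`. Since `E M_Po E = s E`, the products `M_Po E` and `E M_Po`
square to `s` times themselves, which makes `S = 1 - (s + β)⁻¹ M_Po E` and
`T = 1 - (s + β)⁻¹ E M_Po` invertible with inverses `1 + β⁻¹ M_Po E` and `1 + β⁻¹ E M_Po`
(Sherman–Morrison). As `N = S M_Po = M_Po T`, cancelling `S` and `T` turns
`N (G + β⁻¹ E) N = N` into `M_Po G M_Po + β⁻¹ M_Po E M_Po = M_Po + β⁻¹ M_Po E M_Po`.
-/

def IsGeneralizedInverse {R : Type*} [Mul R] (A G : R) : Prop := A * G * A = A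

section

variable {K R : Type*} [Field K] [Ring R] [Algebra K R]

theorem isGeneralizedInverse_smul_smul_inv_iff {t : K} (ht : t ≠ 0) {A G : R} :
    IsGeneralizedInverse (t • A) (t⁻¹ • G) ↔ IsGeneralizedInverse A G := by
  have h : t • A * (t⁻¹ • G) * (t • A) = t • (A * G * A) := by
    simp only [smul_mul_assoc, mul_smul_comm, smul_smul, mul_inv_cancel_left₀ ht]
  rw [IsGeneralizedInverse, IsGeneralizedInverse, h]
  exact (smul_right_injective R ht).eq_iff

theorem one_sub_smul_mul_one_add_smul {A : R} {s β : K} (hA : A * A = s • A) (hβ : β ≠ 0)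
    (hsβ : s + β ≠ 0) : (1 - (s + β)⁻¹ • A) * (1 + β⁻¹ • A) = 1 := by
  have hcoef : β⁻¹ - (s + β)⁻¹ - (s + β)⁻¹ * β⁻¹ * s = 0 := by field_simp; ring
  calc (1 - (s + β)⁻¹ • A) * (1 + β⁻¹ • A)
      = 1 + (β⁻¹ - (s + β)⁻¹ - (s + β)⁻¹ * β⁻¹ * s) • A := by
        simp only [sub_mul, mul_add, one_mul, mul_one, smul_mul_smul_comm, hA, smul_smul]
        module
    _ = 1 := by rw [hcoef, zero_smul, add_zero]

theorem one_add_smul_mul_one_sub_smul {A : R} {s β : K} (hA : A * A = s • A) (hβ : β ≠ 0)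
    (hsβ : s + β ≠ 0) : (1 + β⁻¹ • A) * (1 - (s + β)⁻¹ • A) = 1 := by
  have hcoef : β⁻¹ - (s + β)⁻¹ - (s + β)⁻¹ * β⁻¹ * s = 0 := by field_simp; ring
  calc (1 + β⁻¹ • A) * (1 - (s + β)⁻¹ • A)
      = 1 + (β⁻¹ - (s + β)⁻¹ - (s + β)⁻¹ * β⁻¹ * s) • A := by
        simp only [add_mul, mul_sub, one_mul, mul_one, smul_mul_smul_comm, hA, smul_smul]
        module
    _ = 1 := by rw [hcoef, zero_smul, add_zero]

theorem isUnit_one_sub_smul {A : R} {s β : K} (hA : A * A = s • A) (hβ : β ≠ 0)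
    (hsβ : s + β ≠ 0) : IsUnit (1 - (s + β)⁻¹ • A) :=
  ⟨⟨_, _, one_sub_smul_mul_one_add_smul hA hβ hsβ, one_add_smul_mul_one_sub_smul hA hβ hsβ⟩, rfl⟩

theorem isGeneralizedInverse_sub_smul_iff {P E : R} {s β : K} (hE : E * P * E = s • E)
    (hβ : β ≠ 0) (hsβ : s + β ≠ 0) (G : R) :
    IsGeneralizedInverse (P - (s + β)⁻¹ • (P * E * P)) (G + β⁻¹ • E) ↔
      IsGeneralizedInverse P G := by
  have hPE : P * E * (P * E) = s • (P * E) := by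
    rw [mul_assoc, ← mul_assoc E, hE, mul_smul_comm]
  have hEP : E * P * (E * P) = s • (E * P) := by
    rw [← mul_assoc, hE, smul_mul_assoc]
  set N := P - (s + β)⁻¹ • (P * E * P)
  set S := 1 - (s + β)⁻¹ • (P * E)
  set T := 1 - (s + β)⁻¹ • (E * P)
  set T' := 1 + β⁻¹ • (E * P)
  have hSP : S * P = N := by rw [sub_mul, one_mul, smul_mul_assoc]
  have hPT : P * T = N := by rw [mul_sub, mul_one, mul_smul_comm, ← mul_assoc]
  have hPT' : P * T' = P + β⁻¹ • (P * E * P) := by rw [mul_add, mul_one, mul_smul_comm, mul_assoc]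
  have hN : N = S * (P * T') * T := by
    rw [mul_assoc S, mul_assoc P, one_add_smul_mul_one_sub_smul hEP hβ hsβ, mul_one, hSP]
  have hNXN : N * (G + β⁻¹ • E) * N = S * (P * (G + β⁻¹ • E) * P) * T :=
    calc N * (G + β⁻¹ • E) * N = S * P * (G + β⁻¹ • E) * (P * T) := by rw [hSP, hPT]
      _ = S * (P * (G + β⁻¹ • E) * P) * T := by simp only [mul_assoc]
  have hS : IsUnit S := isUnit_one_sub_smul hPE hβ hsβ
  have hT : IsUnit T := isUnit_one_sub_smul hEP hβ hsβ
  calc N * (G + β⁻¹ • E) * N = N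
      ↔ S * (P * (G + β⁻¹ • E) * P) * T = S * (P * T') * T := by rw [hNXN, ← hN]
    _ ↔ P * G * P + β⁻¹ • (P * E * P) = P + β⁻¹ • (P * E * P) := by
        rw [hT.mul_left_inj, hS.mul_right_inj, hPT', mul_add, add_mul, mul_smul_comm,
          smul_mul_assoc]
    _ ↔ P * G * P = P := add_left_inj _

end

theorem vecMulVec_mul_mul_vecMulVec {n α : Type*} [Fintype n] [CommRing α] (u : n → α)
    (P : Matrix n n α) : vecMulVec u u * P * vecMulVec u u = (u ⬝ᵥ P *ᵥ u) • vecMulVec u u := by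
  rw [vecMulVec_mul, vecMulVec_mul_vecMulVec, vecMulVec_smul, dotProduct_mulVec]

theorem generalized_inverse_equivalence_general
    (a b m : ℝ) (ha : 0 < a) (hb : 0 < b) (hm : 0 < m)
    (p : ℕ)
    (e1 : Fin p → ℝ)
    (MPo : Matrix (Fin p) (Fin p) ℝ) (hMPo : MPo.PosSemidef)
    (M : Matrix (Fin p) (Fin p) ℝ)
    (hM : M = (a / b) • (MPo -
      (e1 ⬝ᵥ (MPo *ᵥ e1) + b / m)⁻¹ •
        (MPo * Matrix.vecMulVec e1 e1 * MPo))) :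
    ∀ G : Matrix (Fin p) (Fin p) ℝ,
      M * ((b / a) • G + (m / a) • Matrix.vecMulVec e1 e1) * M = M ↔
      MPo * G * MPo = MPo := by
  intro G
  have hs : 0 ≤ e1 ⬝ᵥ MPo *ᵥ e1 := hMPo.dotProduct_mulVec_nonneg e1
  have hβ : 0 < b / m := div_pos hb hm
  have hX : (b / a) • G + (m / a) • vecMulVec e1 e1 =
      (a / b)⁻¹ • (G + (b / m)⁻¹ • vecMulVec e1 e1) := by
    rw [smul_add, smul_smul, inv_div, inv_div, div_mul_div_comm, mul_comm b m,
      mul_div_mul_right _ _ hb.ne']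
  rw [hM, hX]
  exact (isGeneralizedInverse_smul_smul_inv_iff (div_pos ha hb).ne').trans
    (isGeneralizedInverse_sub_smul_iff (vecMulVec_mul_mul_vecMulVec e1 MPo) hβ.ne'
      (add_pos_of_nonneg_of_pos hs hβ).ne' G)

/-- `(b/a)·G + (m/a)·e₁e₁ᵀ` is a generalized inverse of the Poisson-Gamma information
matrix `M` iff `G` is a generalized inverse of the Poisson information matrix `M_Po`. -/
theorem generalized_inverse_equivalence
    (a b m : ℝ) (ha : 0 < a) (hb : 0 < b) (hm : 0 < m)
    (p : ℕ) (hp : 1 ≤ p)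
    (e1 : Fin p → ℝ) (he1 : e1 = fun i : Fin p => if (i : ℕ) = 0 then (1:ℝ) else 0)
    (MPo : Matrix (Fin p) (Fin p) ℝ) (hMPo : MPo.PosSemidef)
    (M : Matrix (Fin p) (Fin p) ℝ)
    (hM : M = (a / b) • (MPo -
      (e1 ⬝ᵥ (MPo *ᵥ e1) + b / m)⁻¹ •
        (MPo * Matrix.vecMulVec e1 e1 * MPo))) :
    ∀ G : Matrix (Fin p) (Fin p) ℝ,
      M * ((b / a) • G + (m / a) • Matrix.vecMulVec e1 e1) * M = M ↔
      MPo * G * MPo = MPo :=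
  generalized_inverse_equivalence_general a b m ha hb hm p e1 MPo hMPo M hM
end

section
/- If M_Po is invertible, then M is invertible and M⁻¹ = (b/a)·M_Po⁻¹ + (m/a)·e₁e₁ᵀ. -/
/-!
Sherman–Morrison for a rank-one downdate: if `A` is invertible and `E = u vᵀ`, then
`A E A E = s • A E` with `s = vᵀ A u`, so multiplying `A - (s + d)⁻¹ • A E A` by
`A⁻¹ + d⁻¹ • E` leaves `1` plus a multiple of `A E` whose coefficient
`d⁻¹ - (s + d)⁻¹ (1 + s d⁻¹)` vanishes. The information matrix is `a/b` times such a
downdate with `d = b/m`, and `s ≥ 0` by positive semidefiniteness keeps `s + d` away from `0`.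
-/

open Matrix

namespace Matrix

variable {n : Type*} [Fintype n]

lemma mul_vecMulVec_mul_mul_vecMulVec {R : Type*} [CommSemiring R] (A : Matrix n n R)
    (u v : n → R) :
    A * vecMulVec u v * A * vecMulVec u v = (v ⬝ᵥ A *ᵥ u) • (A * vecMulVec u v) := by
  rw [mul_vecMulVec A, vecMulVec_mul, vecMulVec_mul_vecMulVec, vecMulVec_smul,
    ← dotProduct_mulVec]

variable [DecidableEq n]

lemma isUnit_and_inv_eq_of_mul_eq_one {R : Type*} [CommRing R] {A B : Matrix n n R}
    (h : A * B = 1) :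
    IsUnit A ∧ A⁻¹ = B :=
  ⟨(isUnit_iff_isUnit_det A).mpr (isUnit_det_of_right_inverse h), inv_eq_right_inv h⟩

theorem sub_inv_smul_mul_vecMulVec_mul_mul_eq_one {K : Type*} [Field K] {A : Matrix n n K}
    (hA : IsUnit A) (u v : n → K) {d : K} (hd : d ≠ 0) (hsd : v ⬝ᵥ A *ᵥ u + d ≠ 0) :
    (A - (v ⬝ᵥ A *ᵥ u + d)⁻¹ • (A * vecMulVec u v * A)) * (A⁻¹ + d⁻¹ • vecMulVec u v) = 1 := by
  set s := v ⬝ᵥ A *ᵥ u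
  have hAA : A * A⁻¹ = 1 := mul_nonsing_inv A ((isUnit_iff_isUnit_det A).mp hA)
  have hcoeff : d⁻¹ - (s + d)⁻¹ - (s + d)⁻¹ * (d⁻¹ * s) = 0 := by
    field_simp
    ring
  calc (A - (s + d)⁻¹ • (A * vecMulVec u v * A)) * (A⁻¹ + d⁻¹ • vecMulVec u v)
      = 1 + (d⁻¹ - (s + d)⁻¹ - (s + d)⁻¹ * (d⁻¹ * s)) • (A * vecMulVec u v) := by
        simp only [Matrix.sub_mul, Matrix.mul_add, Matrix.smul_mul, Matrix.mul_smul,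
          Matrix.mul_assoc (A * vecMulVec u v), hAA, Matrix.mul_one]
        rw [← Matrix.mul_assoc (A * vecMulVec u v), mul_vecMulVec_mul_mul_vecMulVec]
        module
    _ = 1 := by rw [hcoeff, zero_smul, add_zero]

end Matrix

theorem inverse_information_matrix_general
    (a b m : ℝ) (ha : 0 < a) (hb : 0 < b) (hm : 0 < m)
    (p : ℕ)
    (e1 : Fin p → ℝ)
    (MPo : Matrix (Fin p) (Fin p) ℝ) (hMPo : MPo.PosSemidef)
    (M : Matrix (Fin p) (Fin p) ℝ)
    (hM : M = (a / b) • (MPo -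
      (e1 ⬝ᵥ (MPo *ᵥ e1) + b / m)⁻¹ •
        (MPo * Matrix.vecMulVec e1 e1 * MPo)))
    (hinv : IsUnit MPo) :
    IsUnit M ∧ M⁻¹ = (b / a) • MPo⁻¹ + (m / a) • Matrix.vecMulVec e1 e1 := by
  have hs : 0 ≤ e1 ⬝ᵥ (MPo *ᵥ e1) := by simpa using hMPo.dotProduct_mulVec_nonneg e1
  have hdowndate := sub_inv_smul_mul_vecMulVec_mul_mul_eq_one hinv e1 e1
    (d := b / m) (by positivity) (by positivity)
  have hrescale : (b / a) • MPo⁻¹ + (m / a) • vecMulVec e1 e1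
      = (b / a) • (MPo⁻¹ + (b / m)⁻¹ • vecMulVec e1 e1) := by
    rw [smul_add, smul_smul]
    congr 2
    field_simp
  have hscalar : a / b * (b / a) = 1 := by field_simp
  apply isUnit_and_inv_eq_of_mul_eq_one
  rw [hrescale, hM, smul_mul_smul_comm, hscalar, one_smul, hdowndate]

/-- If `M_Po` is invertible then `M` is invertible with
`M⁻¹ = (b/a)·M_Po⁻¹ + (m/a)·e₁e₁ᵀ`. -/
theorem inverse_information_matrix
    (a b m : ℝ) (ha : 0 < a) (hb : 0 < b) (hm : 0 < m)
    (p : ℕ) (hp : 1 ≤ p)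
    (e1 : Fin p → ℝ) (he1 : e1 = fun i : Fin p => if (i : ℕ) = 0 then (1:ℝ) else 0)
    (MPo : Matrix (Fin p) (Fin p) ℝ) (hMPo : MPo.PosSemidef)
    (M : Matrix (Fin p) (Fin p) ℝ)
    (hM : M = (a / b) • (MPo -
      (e1 ⬝ᵥ (MPo *ᵥ e1) + b / m)⁻¹ •
        (MPo * Matrix.vecMulVec e1 e1 * MPo)))
    (hinv : IsUnit MPo) :
    IsUnit M ∧ M⁻¹ = (b / a) • MPo⁻¹ + (m / a) • Matrix.vecMulVec e1 e1 :=
  inverse_information_matrix_general a b m ha hb hm p e1 MPo hMPo M hM hinv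
end

section
/- Let A and B be symmetric positive definite p×p real matrices, let D be a symmetric positive semidefinite p×p real matrix, and let α ∈ [0,1]. Then the matrices A⁻¹ + D, B⁻¹ + D and (α·A + (1−α)·B)⁻¹ + D are positive definite (hence invertible), and the matrix ((α·A + (1−α)·B)⁻¹ + D)⁻¹ − [ α·(A⁻¹ + D)⁻¹ + (1−α)·(B⁻¹ + D)⁻¹ ] is positive semidefinite. (In design language: the information matrix of a convex combination of two designs dominates, in the Loewner order, the convex combination of the information matrices, for information matrices of the form M(ξ) = (M̃(ξ)⁻¹ + D)⁻¹ with M̃ linear in the design ξ.) -/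
/-!
For every `H`, the map `X ↦ (1 - Hᴴ D) X (1 - D H) + Hᴴ D H` is affine in `X` and exceeds
`F X = (X⁻¹ + D)⁻¹` by `(H - F X)ᴴ (D + D X D) (H - F X) ≥ 0`, with equality at `H = F X`.
Thus `F` is a pointwise infimum of affine maps, hence concave in the Loewner order: the majorant
with `H = F (α A + (1 - α) B)` is tight at the convex combination and dominates `F` at `A`
and at `B`.
-/

theorem one_sub_mul_mul_one_sub_add_mul_mul_sub_eq {R : Type*} [Ring R] {x d f : R}
    (hf₁ : f * d * x = x - f) (hf₂ : x * d * f = x - f) (g h : R) :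
    (1 - h * d) * x * (1 - d * g) + h * d * g - f = (h - f) * (d + d * x * d) * (g - f) := by
  have hfP : f * (d + d * x * d) = x * d := by
    rw [mul_add, ← mul_assoc, ← mul_assoc, hf₁]; noncomm_ring
  have hPf : (d + d * x * d) * f = d * x := by
    rw [add_mul, mul_assoc, mul_assoc, ← mul_assoc x, hf₂]; noncomm_ring
  calc (1 - h * d) * x * (1 - d * g) + h * d * g - f
      = h * (d + d * x * d) * g - h * (d * x) - (x * d) * g + (x - f) := by noncomm_ring
    _ = h * (d + d * x * d) * g - h * ((d + d * x * d) * f) - (f * (d + d * x * d)) * g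
          + f * (d + d * x * d) * f := by rw [hPf, hfP, hf₂]
    _ = (h - f) * (d + d * x * d) * (g - f) := by noncomm_ring

namespace Matrix

variable {n K : Type*} [Field K]

lemma PosDef.convexComb [PartialOrder K] [StarRing K] [StarOrderedRing K] [IsOrderedRing K]
    {A B : Matrix n n K} (hA : A.PosDef) (hB : B.PosDef) {α : K} (hα0 : 0 ≤ α) (hα1 : α ≤ 1) :
    (α • A + (1 - α) • B).PosDef := by
  rcases hα0.eq_or_lt with rfl | hα0
  · simpa using hB
  · exact (hA.smul hα0).add_posSemidef (hB.posSemidef.smul (sub_nonneg.mpr hα1))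

variable [Fintype n] [DecidableEq n]

lemma inv_add_mul_mul_self {X : Matrix n n K} (D : Matrix n n K) (hX : IsUnit X)
    (hXD : IsUnit (X⁻¹ + D)) : (X⁻¹ + D)⁻¹ * D * X = X - (X⁻¹ + D)⁻¹ := by
  have h := congrArg (· * X) ((X⁻¹ + D).nonsing_inv_mul ((isUnit_iff_isUnit_det _).mp hXD))
  simp only [Matrix.mul_add, Matrix.add_mul, Matrix.mul_assoc, Matrix.one_mul] at h
  rw [Matrix.nonsing_inv_mul _ ((isUnit_iff_isUnit_det _).mp hX), Matrix.mul_one] at h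
  rw [Matrix.mul_assoc]
  exact eq_sub_of_add_eq' h

lemma self_mul_mul_inv_add {X : Matrix n n K} (D : Matrix n n K) (hX : IsUnit X)
    (hXD : IsUnit (X⁻¹ + D)) : X * D * (X⁻¹ + D)⁻¹ = X - (X⁻¹ + D)⁻¹ := by
  have h := congrArg (X * ·) ((X⁻¹ + D).mul_nonsing_inv ((isUnit_iff_isUnit_det _).mp hXD))
  simp only [Matrix.mul_add, Matrix.add_mul, ← Matrix.mul_assoc, Matrix.mul_one] at h
  rw [Matrix.mul_nonsing_inv _ ((isUnit_iff_isUnit_det _).mp hX), Matrix.one_mul] at h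
  exact eq_sub_of_add_eq' h

variable [StarRing K]

def affineMajorant (D H X : Matrix n n K) : Matrix n n K :=
  (1 - Hᴴ * D) * X * (1 - D * H) + Hᴴ * D * H

lemma affineMajorant_convexComb (D H A B : Matrix n n K) (α : K) :
    affineMajorant D H (α • A + (1 - α) • B)
      = α • affineMajorant D H A + (1 - α) • affineMajorant D H B := by
  simp only [affineMajorant, Matrix.mul_add, Matrix.add_mul, Matrix.mul_smul, Matrix.smul_mul]
  module

variable [PartialOrder K] [IsOrderedRing K] {D X : Matrix n n K}

lemma affineMajorant_sub_inv_add (hX : X.PosDef) (hD : D.PosSemidef) (H : Matrix n n K) :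
    affineMajorant D H X - (X⁻¹ + D)⁻¹
      = (H - (X⁻¹ + D)⁻¹)ᴴ * (D + D * X * D) * (H - (X⁻¹ + D)⁻¹) := by
  have hXD := hX.inv.add_posSemidef hD
  rw [conjTranspose_sub, hXD.isHermitian.inv.eq]
  exact one_sub_mul_mul_one_sub_add_mul_mul_sub_eq
    (inv_add_mul_mul_self D hX.isUnit hXD.isUnit) (self_mul_mul_inv_add D hX.isUnit hXD.isUnit) _ _

lemma affineMajorant_inv_add_self (hX : X.PosDef) (hD : D.PosSemidef) :
    affineMajorant D (X⁻¹ + D)⁻¹ X = (X⁻¹ + D)⁻¹ := by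
  simpa [sub_eq_zero] using affineMajorant_sub_inv_add hX hD (X⁻¹ + D)⁻¹

lemma posSemidef_affineMajorant_sub_inv_add (hX : X.PosDef) (hD : D.PosSemidef)
    (H : Matrix n n K) : (affineMajorant D H X - (X⁻¹ + D)⁻¹).PosSemidef := by
  rw [affineMajorant_sub_inv_add hX hD]
  have hDXD := hX.posSemidef.conjTranspose_mul_mul_same D
  rw [hD.isHermitian.eq] at hDXD
  exact (hD.add hDXD).conjTranspose_mul_mul_same _

variable [StarOrderedRing K]

theorem posSemidef_inv_add_convexComb_sub {A B : Matrix n n K} (hA : A.PosDef) (hB : B.PosDef)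
    (hD : D.PosSemidef) {α : K} (hα0 : 0 ≤ α) (hα1 : α ≤ 1) :
    (((α • A + (1 - α) • B)⁻¹ + D)⁻¹ - (α • (A⁻¹ + D)⁻¹ + (1 - α) • (B⁻¹ + D)⁻¹)).PosSemidef := by
  set G := ((α • A + (1 - α) • B)⁻¹ + D)⁻¹
  have hG : G = α • affineMajorant D G A + (1 - α) • affineMajorant D G B := by
    rw [← affineMajorant_convexComb, affineMajorant_inv_add_self (hA.convexComb hB hα0 hα1) hD]
  have hsum := ((posSemidef_affineMajorant_sub_inv_add hA hD G).smul hα0).add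
    ((posSemidef_affineMajorant_sub_inv_add hB hD G).smul (sub_nonneg.mpr hα1))
  rw [hG]
  convert hsum using 1
  module

end Matrix

/-- Concavity of the information matrix in the design (Loewner order): for positive
definite `A`, `B`, positive semidefinite `D` and `α ∈ [0,1]`, the matrices `A⁻¹ + D`,
`B⁻¹ + D` and `(α·A + (1−α)·B)⁻¹ + D` are positive definite, and
`((α·A + (1−α)·B)⁻¹ + D)⁻¹ ≥ α·(A⁻¹ + D)⁻¹ + (1−α)·(B⁻¹ + D)⁻¹`. -/
theorem information_matrix_superadditive
    (p : ℕ) (A B D : Matrix (Fin p) (Fin p) ℝ)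
    (hA : A.PosDef) (hB : B.PosDef) (hD : D.PosSemidef)
    (α : ℝ) (hα0 : 0 ≤ α) (hα1 : α ≤ 1) :
    (A⁻¹ + D).PosDef ∧ (B⁻¹ + D).PosDef ∧
    ((α • A + (1 - α) • B)⁻¹ + D).PosDef ∧
    (((α • A + (1 - α) • B)⁻¹ + D)⁻¹ -
      (α • (A⁻¹ + D)⁻¹ + (1 - α) • (B⁻¹ + D)⁻¹)).PosSemidef :=
  ⟨hA.inv.add_posSemidef hD, hB.inv.add_posSemidef hD,
    (hA.convexComb hB hα0 hα1).inv.add_posSemidef hD,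
    Matrix.posSemidef_inv_add_convexComb_sub hA hB hD hα0 hα1⟩
end

section
/- Let r ≥ 1, let A₁,…,A_r be symmetric positive definite p×p real matrices, let q₁,…,q_r ≥ 0 with Σ_{i=1}^r q_i = 1, let D be a symmetric positive semidefinite p×p real matrix, and let Φ be a real-valued function on symmetric positive semidefinite p×p matrices that is isotonic with respect to the Loewner order (i.e. Φ(M₁) ≥ Φ(M₂) whenever M₁ − M₂ is positive semidefinite). Then Φ( ((Σ_{i=1}^r q_i·A_i)⁻¹ + D)⁻¹ ) ≥ Φ( Σ_{i=1}^r q_i·(A_i⁻¹ + D)⁻¹ ). (In design language: replacing a population design ζ = {(ξ_i, q_i)} by the single individual design ξ = Σ_i q_i ξ_i, used for all statistical units, does not decrease any isotonic optimality criterion, for information matrices of the form M(ξ) = (M̃(ξ)⁻¹ + D)⁻¹ with M̃ linear in ξ.) -/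
/-!
The quadratic form `x ⬝ᵥ (A⁻¹ + D)⁻¹ *ᵥ x` is the maximum over `y` of
`2 x ⬝ᵥ y - y ⬝ᵥ A⁻¹ *ᵥ y - y ⬝ᵥ D *ᵥ y`, attained at `y = (A⁻¹ + D)⁻¹ *ᵥ x`. Averaging the
maximisers `yᵢ` for the `Aᵢ`, joint convexity of `(y, A) ↦ y ⬝ᵥ A⁻¹ *ᵥ y` and convexity of
`y ↦ y ⬝ᵥ D *ᵥ y` bound the average of the maxima by the objective for `∑ qᵢ • Aᵢ` at
`∑ qᵢ • yᵢ`, hence by its maximum. So `A ↦ (A⁻¹ + D)⁻¹` is Loewner concave.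
-/

open Matrix Finset

open scoped MatrixOrder

namespace Matrix

variable {n ι : Type*} [Fintype ι]

lemma posDef_sum_smul {A : ι → Matrix n n ℝ} (hA : ∀ i, (A i).PosDef) {q : ι → ℝ}
    (hq : ∀ i, 0 ≤ q i) (hq1 : ∑ i, q i = 1) : (∑ i, q i • A i).PosDef := by
  classical
  obtain ⟨j, -, hj⟩ : ∃ j ∈ univ, 0 < q j :=
    exists_lt_of_sum_lt (f := fun _ => 0) (by simp [hq1])
  rw [← add_sum_erase _ _ (mem_univ j)]
  exact ((hA j).smul hj).add_posSemidef <|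
    posSemidef_sum _ fun i _ => (hA i).posSemidef.smul (hq i)

variable [Fintype n]

lemma IsHermitian.dotProduct_mulVec_comm {E : Matrix n n ℝ} (hE : E.IsHermitian) (u v : n → ℝ) :
    v ⬝ᵥ E *ᵥ u = u ⬝ᵥ E *ᵥ v := by
  rw [← dotProduct_transpose_mulVec, ← conjTranspose_eq_transpose_of_trivial, hE.eq]

lemma PosSemidef.two_mul_dotProduct_mulVec_le {E : Matrix n n ℝ} (hE : E.PosSemidef)
    (u v : n → ℝ) : 2 * (u ⬝ᵥ E *ᵥ v) ≤ u ⬝ᵥ E *ᵥ u + v ⬝ᵥ E *ᵥ v := by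
  have h := hE.dotProduct_mulVec_nonneg (u - v)
  rw [star_trivial, mulVec_sub, sub_dotProduct, dotProduct_sub, dotProduct_sub,
    hE.isHermitian.dotProduct_mulVec_comm u v] at h
  linarith

lemma dotProduct_sum_smul_mulVec (q : ι → ℝ) (A : ι → Matrix n n ℝ) (u v : n → ℝ) :
    u ⬝ᵥ (∑ i, q i • A i) *ᵥ v = ∑ i, q i * (u ⬝ᵥ A i *ᵥ v) := by
  simp only [sum_mulVec, dotProduct_sum, smul_mulVec, dotProduct_smul, smul_eq_mul]

lemma sum_smul_dotProduct (q : ι → ℝ) (y : ι → n → ℝ) (v : n → ℝ) :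
    (∑ i, q i • y i) ⬝ᵥ v = ∑ i, q i * (y i ⬝ᵥ v) := by
  simp only [sum_dotProduct, smul_dotProduct, smul_eq_mul]

lemma PosSemidef.dotProduct_mulVec_sum_smul_le {D : Matrix n n ℝ} (hD : D.PosSemidef)
    {q : ι → ℝ} (hq : ∀ i, 0 ≤ q i) (hq1 : ∑ i, q i = 1) (y : ι → n → ℝ) :
    (∑ i, q i • y i) ⬝ᵥ D *ᵥ (∑ i, q i • y i) ≤ ∑ i, q i * (y i ⬝ᵥ D *ᵥ y i) := by
  set ybar := ∑ i, q i • y i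
  have tangent : ∀ i, q i * (2 * (y i ⬝ᵥ D *ᵥ ybar) - ybar ⬝ᵥ D *ᵥ ybar)
      ≤ q i * (y i ⬝ᵥ D *ᵥ y i) := fun i =>
    mul_le_mul_of_nonneg_left (by linarith [hD.two_mul_dotProduct_mulVec_le (y i) ybar]) (hq i)
  calc ybar ⬝ᵥ D *ᵥ ybar
      = ∑ i, q i * (2 * (y i ⬝ᵥ D *ᵥ ybar) - ybar ⬝ᵥ D *ᵥ ybar) := by
        simp only [mul_sub, sum_sub_distrib, ← sum_mul, hq1, mul_left_comm _ (2 : ℝ), ← mul_sum,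
          ← sum_smul_dotProduct]
        ring
    _ ≤ ∑ i, q i * (y i ⬝ᵥ D *ᵥ y i) := sum_le_sum fun i _ => tangent i

variable [DecidableEq n]

lemma PosDef.mulVec_inv_mulVec {E : Matrix n n ℝ} (hE : E.PosDef) (x : n → ℝ) :
    E *ᵥ (E⁻¹ *ᵥ x) = x := by
  rw [mulVec_mulVec, mul_nonsing_inv _ ((isUnit_iff_isUnit_det E).1 hE.isUnit), one_mulVec]

/-- The Legendre-type bound behind `x ⬝ᵥ E⁻¹ *ᵥ x = max_y (2 x ⬝ᵥ y - y ⬝ᵥ E *ᵥ y)`;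
the maximum is attained at `y = E⁻¹ *ᵥ x`. -/
lemma PosDef.two_mul_dotProduct_sub_le {E : Matrix n n ℝ} (hE : E.PosDef) (x y : n → ℝ) :
    2 * (x ⬝ᵥ y) - y ⬝ᵥ E *ᵥ y ≤ x ⬝ᵥ E⁻¹ *ᵥ x := by
  have h := hE.posSemidef.two_mul_dotProduct_mulVec_le y (E⁻¹ *ᵥ x)
  rw [hE.mulVec_inv_mulVec, dotProduct_comm (E⁻¹ *ᵥ x), dotProduct_comm y] at h
  linarith

/-- Joint convexity of the matrix-fractional function. -/
lemma dotProduct_inv_mulVec_sum_smul_le {A : ι → Matrix n n ℝ} (hA : ∀ i, (A i).PosDef)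
    {q : ι → ℝ} (hq : ∀ i, 0 ≤ q i) (hAq : (∑ i, q i • A i).PosDef) (y : ι → n → ℝ) :
    (∑ i, q i • y i) ⬝ᵥ (∑ i, q i • A i)⁻¹ *ᵥ (∑ i, q i • y i)
      ≤ ∑ i, q i * (y i ⬝ᵥ (A i)⁻¹ *ᵥ y i) := by
  set ybar := ∑ i, q i • y i
  set z := (∑ i, q i • A i)⁻¹ *ᵥ ybar
  have tangent : ∀ i, q i * (2 * (y i ⬝ᵥ z) - z ⬝ᵥ A i *ᵥ z)
      ≤ q i * (y i ⬝ᵥ (A i)⁻¹ *ᵥ y i) := fun i =>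
    mul_le_mul_of_nonneg_left ((hA i).two_mul_dotProduct_sub_le (y i) z) (hq i)
  have average : ∑ i, q i * (2 * (y i ⬝ᵥ z) - z ⬝ᵥ A i *ᵥ z)
      = 2 * (ybar ⬝ᵥ z) - z ⬝ᵥ (∑ i, q i • A i) *ᵥ z := by
    simp only [mul_sub, sum_sub_distrib, mul_left_comm _ (2 : ℝ), ← mul_sum,
      sum_smul_dotProduct, dotProduct_sum_smul_mulVec, ybar]
  calc ybar ⬝ᵥ z
      = ∑ i, q i * (2 * (y i ⬝ᵥ z) - z ⬝ᵥ A i *ᵥ z) := by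
        rw [average, hAq.mulVec_inv_mulVec, dotProduct_comm z]
        ring
    _ ≤ ∑ i, q i * (y i ⬝ᵥ (A i)⁻¹ *ᵥ y i) := sum_le_sum fun i _ => tangent i

theorem sum_smul_inv_inv_add_le {A : ι → Matrix n n ℝ} (hA : ∀ i, (A i).PosDef) {q : ι → ℝ}
    (hq : ∀ i, 0 ≤ q i) (hq1 : ∑ i, q i = 1) {D : Matrix n n ℝ} (hD : D.PosSemidef) :
    ∑ i, q i • ((A i)⁻¹ + D)⁻¹ ≤ ((∑ i, q i • A i)⁻¹ + D)⁻¹ := by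
  have hAq := posDef_sum_smul hA hq hq1
  have hE : ∀ i, ((A i)⁻¹ + D).PosDef := fun i => (hA i).inv.add_posSemidef hD
  have hEq : ((∑ i, q i • A i)⁻¹ + D).PosDef := hAq.inv.add_posSemidef hD
  have hsum : (∑ i, q i • ((A i)⁻¹ + D)⁻¹).PosSemidef :=
    posSemidef_sum _ fun i _ => (hE i).inv.posSemidef.smul (hq i)
  refine le_iff.2 <| .of_dotProduct_mulVec_nonneg
    (hEq.inv.isHermitian.sub hsum.isHermitian) fun x => ?_
  rw [star_trivial, sub_mulVec, dotProduct_sub, dotProduct_sum_smul_mulVec, sub_nonneg]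
  set y : ι → n → ℝ := fun i => ((A i)⁻¹ + D)⁻¹ *ᵥ x
  set ybar := ∑ i, q i • y i
  have attained : ∀ i, x ⬝ᵥ ((A i)⁻¹ + D)⁻¹ *ᵥ x
      = 2 * (x ⬝ᵥ y i) - (y i ⬝ᵥ (A i)⁻¹ *ᵥ y i + y i ⬝ᵥ D *ᵥ y i) := fun i => by
    rw [← dotProduct_add, ← add_mulVec, (hE i).mulVec_inv_mulVec, dotProduct_comm]
    ring
  calc ∑ i, q i * (x ⬝ᵥ ((A i)⁻¹ + D)⁻¹ *ᵥ x)
      = 2 * (x ⬝ᵥ ybar) - ∑ i, q i * (y i ⬝ᵥ (A i)⁻¹ *ᵥ y i)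
          - ∑ i, q i * (y i ⬝ᵥ D *ᵥ y i) := by
        simp only [attained, mul_sub, mul_add, sum_sub_distrib, sum_add_distrib,
          mul_left_comm _ (2 : ℝ), ← mul_sum, dotProduct_comm x, sum_smul_dotProduct, ybar]
        ring
    _ ≤ 2 * (x ⬝ᵥ ybar) - ybar ⬝ᵥ (∑ i, q i • A i)⁻¹ *ᵥ ybar - ybar ⬝ᵥ D *ᵥ ybar := by
        linarith [dotProduct_inv_mulVec_sum_smul_le hA hq hAq y,
          hD.dotProduct_mulVec_sum_smul_le hq hq1 y]
    _ = 2 * (x ⬝ᵥ ybar) - ybar ⬝ᵥ ((∑ i, q i • A i)⁻¹ + D) *ᵥ ybar := by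
        rw [add_mulVec, dotProduct_add]
        ring
    _ ≤ x ⬝ᵥ ((∑ i, q i • A i)⁻¹ + D)⁻¹ *ᵥ x := hEq.two_mul_dotProduct_sub_le x ybar

end Matrix

theorem isotonic_criterion_single_design_general
    (p r : ℕ)
    (A : Fin r → Matrix (Fin p) (Fin p) ℝ) (hA : ∀ i, (A i).PosDef)
    (q : Fin r → ℝ) (hq : ∀ i, 0 ≤ q i) (hqs : ∑ i, q i = 1)
    (D : Matrix (Fin p) (Fin p) ℝ) (hD : D.PosSemidef)
    (Φ : Matrix (Fin p) (Fin p) ℝ → ℝ)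
    (hΦ : ∀ M₁ M₂ : Matrix (Fin p) (Fin p) ℝ, M₁.PosSemidef → M₂.PosSemidef →
      (M₁ - M₂).PosSemidef → Φ M₂ ≤ Φ M₁) :
    Φ (∑ i, q i • ((A i)⁻¹ + D)⁻¹) ≤ Φ (((∑ i, q i • A i)⁻¹ + D)⁻¹) := by
  have hsingle : (((∑ i, q i • A i)⁻¹ + D)⁻¹).PosSemidef :=
    ((posDef_sum_smul hA hq hqs).inv.add_posSemidef hD).inv.posSemidef
  have hpopulation : (∑ i, q i • ((A i)⁻¹ + D)⁻¹).PosSemidef :=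
    posSemidef_sum _ fun i _ => ((hA i).inv.add_posSemidef hD).inv.posSemidef.smul (hq i)
  exact hΦ _ _ hsingle hpopulation (le_iff.1 (sum_smul_inv_inv_add_le hA hq hqs hD))

/-- Replacing a population design `{(ξ_i, q_i)}` by the single mixed individual design
`Σ q_i ξ_i` does not decrease any isotonic optimality criterion `Φ`, for information
matrices of the form `M(ξ) = (M̃(ξ)⁻¹ + D)⁻¹` with `M̃` linear in the design. -/
theorem isotonic_criterion_single_design
    (p r : ℕ) (hr : 1 ≤ r)
    (A : Fin r → Matrix (Fin p) (Fin p) ℝ) (hA : ∀ i, (A i).PosDef)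
    (q : Fin r → ℝ) (hq : ∀ i, 0 ≤ q i) (hqs : ∑ i, q i = 1)
    (D : Matrix (Fin p) (Fin p) ℝ) (hD : D.PosSemidef)
    (Φ : Matrix (Fin p) (Fin p) ℝ → ℝ)
    (hΦ : ∀ M₁ M₂ : Matrix (Fin p) (Fin p) ℝ, M₁.PosSemidef → M₂.PosSemidef →
      (M₁ - M₂).PosSemidef → Φ M₂ ≤ Φ M₁) :
    Φ (∑ i, q i • ((A i)⁻¹ + D)⁻¹) ≤ Φ (((∑ i, q i • A i)⁻¹ + D)⁻¹) :=
  isotonic_criterion_single_design_general p r A hA q hq hqs D hD Φ hΦ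
end

section
/- Let λ₁, λ_p be real numbers with 0 < λ₁ < λ_p, set a₁ := 1 + (m/b)·λ₁ and a_p := 1 + (m/b)·λ_p, and define w_p* := 2 / ( p + √( (p−2)² + 4·(p−1)·a_p/a₁ ) ) and w₁* := (1 − w_p*)/(p−1). Then the following identity holds: ( (p−1)·w₁*·λ₁ + w_p*·λ_p )·w_p* − w₁*·λ₁ + (b/m)·(1 − p·w₁*) = 0. -/
open Real

/-
`w_p*` is the rationalised positive root `2 / (B + √(B² + 4A))` of `A w² + B w = 1`, with
`A = (p − 1)(a_p/a₁ − 1)` and `B = p`. Writing `λ = (b/m)(a − 1)` and `w₁* = (1 − w_p*)/(p − 1)`,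
the identity, multiplied by `(m/b)(p − 1)`, becomes `a₁ ((p − 1)(a_p/a₁ − 1) w_p*² + p w_p* − 1) = 0`.
-/

theorem mul_sq_add_mul_eq_one_of_eq_two_div_add_sqrt {A B w : ℝ} (hB : 0 < B)
    (hdisc : 0 ≤ B ^ 2 + 4 * A) (hw : w = 2 / (B + √(B ^ 2 + 4 * A))) :
    A * w ^ 2 + B * w = 1 := by
  set s := √(B ^ 2 + 4 * A)
  have hs : s ^ 2 = B ^ 2 + 4 * A := sq_sqrt hdisc
  have hws : w * s = 2 - B * w := by
    rw [hw]
    field_simp [(by positivity : (0 : ℝ) < B + s).ne']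
    ring
  -- square `w s = 2 - B w` and substitute `s² = B² + 4A`
  linear_combination ((w * s + 2 - B * w) * hws - w ^ 2 * hs) / 4

/-- The identity satisfied by the D-optimal weights of the Poisson-Gamma model:
`(( p−1)·w₁*·λ₁ + w_p*·λ_p)·w_p* − w₁*·λ₁ + (b/m)·(1 − p·w₁*) = 0`. -/
theorem D_optimal_weights_identity
    (b m : ℝ) (hb : 0 < b) (hm : 0 < m)
    (p : ℕ) (hp : 2 ≤ p)
    (l1 lp : ℝ) (hl1 : 0 < l1) (hlp : l1 < lp)
    (a1 ap wp w1 : ℝ)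
    (ha1 : a1 = 1 + (m / b) * l1) (hap : ap = 1 + (m / b) * lp)
    (hwp : wp = 2 / ((p : ℝ) + Real.sqrt (((p : ℝ) - 2) ^ 2 +
      4 * ((p : ℝ) - 1) * (ap / a1))))
    (hw1 : w1 = (1 - wp) / ((p : ℝ) - 1)) :
    (((p : ℝ) - 1) * w1 * l1 + wp * lp) * wp - w1 * l1 + (b / m) * (1 - (p : ℝ) * w1) = 0 := by
  have hp2 : (2 : ℝ) ≤ p := by exact_mod_cast hp
  have ha1_pos : 0 < a1 := by rw [ha1]; positivity
  have hap_pos : 0 < ap := by rw [hap]; have := hl1.trans hlp; positivity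
  have hdisc : ((p : ℝ) - 2) ^ 2 + 4 * ((p : ℝ) - 1) * (ap / a1)
      = (p : ℝ) ^ 2 + 4 * (((p : ℝ) - 1) * (ap / a1 - 1)) := by ring
  have hdisc_nonneg : 0 ≤ ((p : ℝ) - 2) ^ 2 + 4 * ((p : ℝ) - 1) * (ap / a1) :=
    add_nonneg (sq_nonneg _) (mul_nonneg (by linarith) (by positivity))
  rw [hdisc] at hwp hdisc_nonneg
  have hquad : ((p : ℝ) - 1) * (ap - a1) * wp ^ 2 + p * a1 * wp = a1 := by
    have h := mul_sq_add_mul_eq_one_of_eq_two_div_add_sqrt (by positivity) hdisc_nonneg hwp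
    rw [div_sub_one ha1_pos.ne'] at h
    field_simp at h
    linear_combination h
  have hl1' : l1 = (b / m) * (a1 - 1) := by rw [ha1]; field_simp; ring
  have hlp' : lp = (b / m) * (ap - 1) := by rw [hap]; field_simp; ring
  rw [hl1', hlp', hw1]
  field_simp [(by linarith : (p : ℝ) - 1 ≠ 0)]
  linear_combination b * hquad
end

section
/- Let C ∈ ℝ (C = f(d)ᵀβ, the maximal value of the linear predictor over the design region). For z > 0 define w_p*(z) := 2 / ( p + √( (p−2)² + 4·(p−1)·(1 + (m/b)·e^C)/(1 + (m/b)·e^{C−z}) ) ) and w₁*(z) := (1 − w_p*(z))/(p−1). Then the equation 0 = m·( (p−1)·w₁*(z)·e^{C−z} + w_p*(z)·e^{C} )·( z·(p−1)·w₁*(z) − 2 ) + b·( z·p·w₁*(z) − 2 ) has a unique solution z* in the interval (0,∞), and this solution satisfies 2·(p−1)/p < z* < 2·p/(p−1). -/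
/-!
Write `u = 1 - w_p*`, so that `(p-1) w₁* = u` and the equation reads
`m E(z) (z u(z) - 2) + b (q z u(z) - 2) = 0` with `q = p/(p-1)` and
`E(z) = u(z) e^{C-z} + (1 - u(z)) e^C > 0`.
Since `w_p*` equals `1/p` at `z = 0` and is strictly decreasing, `u` takes values in `(1/q, 1)`
and increases, so `s(z) = z u(z)` is strictly increasing and `E` is decreasing.
At a root the two summands have opposite signs, which forces `2/q < s < 2`; this gives the bounds
on `z`, and on `{s < 2}` the expression is strictly increasing, which gives uniqueness.
Existence follows from the intermediate value theorem on `[2/q, 2q]`.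
-/

open Real Set

lemma two_div_lt_and_lt_two_of_eq_zero {m b q E s : ℝ} (hm : 0 < m) (hb : 0 < b) (hq : 1 < q)
    (hE : 0 < E) (h : m * E * (s - 2) + b * (q * s - 2) = 0) : 2 / q < s ∧ s < 2 := by
  have hs : s < 2 := by
    by_contra! hs
    nlinarith [mul_nonneg (mul_pos hm hE).le (sub_nonneg.2 hs), mul_pos hb (sub_pos.2 hq)]
  refine ⟨?_, hs⟩
  rw [div_lt_iff₀ (by linarith)]
  nlinarith [mul_pos (mul_pos hm hE) (sub_pos.2 hs)]

lemma mul_sub_two_add_mul_sub_two_lt {m b q E₁ E₂ s₁ s₂ : ℝ} (hm : 0 < m) (hb : 0 ≤ b)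
    (hq : 0 ≤ q) (hE₂ : 0 < E₂) (hE : E₂ ≤ E₁) (hs : s₁ < s₂) (hs₂ : s₂ ≤ 2) :
    m * E₁ * (s₁ - 2) + b * (q * s₁ - 2) < m * E₂ * (s₂ - 2) + b * (q * s₂ - 2) := by
  nlinarith [mul_nonneg (mul_nonneg hm.le (sub_nonneg.2 hE)) (sub_nonneg.2 (hs.le.trans hs₂)),
    mul_pos (mul_pos hm hE₂) (sub_pos.2 hs), mul_nonneg (mul_nonneg hb hq) (sub_pos.2 hs).le]

section Equation

/-- The factor `(p-1) w₁*(z) e^{C-z} + w_p*(z) e^C` of the equation, written with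
`u = (p-1) w₁* = 1 - w_p*`. -/
noncomputable def meanIntensity (C : ℝ) (u : ℝ → ℝ) (z : ℝ) : ℝ :=
  u z * exp (C - z) + (1 - u z) * exp C

/-- The right-hand side of the equation for the optimal distance, written with
`u = (p-1) w₁*` and `q = p/(p-1)`. -/
noncomputable def distanceEquation (m b q C : ℝ) (u : ℝ → ℝ) (z : ℝ) : ℝ :=
  m * meanIntensity C u z * (z * u z - 2) + b * (q * (z * u z) - 2)

variable {m b q C : ℝ} {u : ℝ → ℝ}

lemma meanIntensity_pos {z : ℝ} (hu₀ : 0 < u z) (hu₁ : u z ≤ 1) : 0 < meanIntensity C u z :=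
  add_pos_of_pos_of_nonneg (mul_pos hu₀ (exp_pos _))
    (mul_nonneg (sub_nonneg.2 hu₁) (exp_pos _).le)

lemma antitoneOn_meanIntensity (hu : ∀ z, 0 < z → 0 ≤ u z) (hu_mono : MonotoneOn u (Ioi 0)) :
    AntitoneOn (meanIntensity C u) (Ioi 0) := by
  intro z₁ hz₁ z₂ hz₂ h
  have h₁ : exp (C - z₁) ≤ exp C := exp_le_exp.2 (by linarith [mem_Ioi.1 hz₁])
  have h₂ : exp (C - z₂) ≤ exp (C - z₁) := exp_le_exp.2 (by linarith)
  have hu₁₂ := hu_mono hz₁ hz₂ h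
  -- `E(z) = e^C - u(z) (e^C - e^{C-z})`, and the subtracted product has two
  -- nonnegative increasing factors
  unfold meanIntensity
  nlinarith [mul_le_mul hu₁₂ (sub_le_sub_left h₂ (exp C)) (sub_nonneg.2 h₁)
    ((hu z₁ hz₁).trans hu₁₂)]

lemma distanceEquation_root_mem_Ioo (hm : 0 < m) (hb : 0 < b) (hq : 1 < q)
    (hu : ∀ z, 0 < z → u z ∈ Ioo (1 / q) 1)
    {z : ℝ} (hz : 0 < z) (hroot : distanceEquation m b q C u z = 0) :
    2 / q < z ∧ z < 2 * q := by
  obtain ⟨hu₁, hu₂⟩ := hu z hz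
  have hu₀ : 0 < u z := (one_div_pos.2 (by linarith)).trans hu₁
  obtain ⟨hs₁, hs₂⟩ :=
    two_div_lt_and_lt_two_of_eq_zero hm hb hq (meanIntensity_pos hu₀ hu₂.le) hroot
  rw [div_lt_iff₀ (by linarith)] at hu₁
  constructor <;> nlinarith

lemma distanceEquation_injOn_roots (hm : 0 < m) (hb : 0 < b) (hq : 1 < q)
    (hu : ∀ z, 0 < z → u z ∈ Ioo (1 / q) 1) (hu_mono : MonotoneOn u (Ioi 0))
    {z₁ z₂ : ℝ} (hz₁ : 0 < z₁) (hz₂ : 0 < z₂)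
    (h₁ : distanceEquation m b q C u z₁ = 0) (h₂ : distanceEquation m b q C u z₂ = 0) :
    z₁ = z₂ := by
  have hu₀ : ∀ z, 0 < z → 0 < u z := fun z hz =>
    (one_div_pos.2 (by linarith)).trans (hu z hz).1
  have hE : ∀ z, 0 < z → 0 < meanIntensity C u z := fun z hz =>
    meanIntensity_pos (hu₀ z hz) (hu z hz).2.le
  suffices key : ∀ y₁ y₂, 0 < y₁ → y₁ < y₂ → distanceEquation m b q C u y₁ = 0 →
      distanceEquation m b q C u y₂ ≠ 0 by
    rcases lt_trichotomy z₁ z₂ with h | h | h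
    · exact absurd h₂ (key z₁ z₂ hz₁ h h₁)
    · exact h
    · exact absurd h₁ (key z₂ z₁ hz₂ h h₂)
  intro y₁ y₂ hy₁ hy hroot₁ hroot₂
  have hy₂ : 0 < y₂ := hy₁.trans hy
  have hs : y₁ * u y₁ < y₂ * u y₂ :=
    calc y₁ * u y₁ < y₂ * u y₁ := mul_lt_mul_of_pos_right hy (hu₀ y₁ hy₁)
      _ ≤ y₂ * u y₂ := mul_le_mul_of_nonneg_left (hu_mono hy₁ hy₂ hy.le) hy₂.le
  have hs₂ := (two_div_lt_and_lt_two_of_eq_zero hm hb hq (hE y₂ hy₂) hroot₂).2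
  have := mul_sub_two_add_mul_sub_two_lt (q := q) hm hb.le (by linarith) (hE y₂ hy₂)
    (antitoneOn_meanIntensity (fun z hz => (hu₀ z hz).le) hu_mono hy₁ hy₂ hy.le) hs hs₂.le
  simp only [distanceEquation] at hroot₁ hroot₂
  linarith

lemma exists_distanceEquation_root (hm : 0 < m) (hb : 0 < b) (hq : 1 < q)
    (hu : ∀ z, 0 < z → u z ∈ Ioo (1 / q) 1) (hu_cont : ContinuousOn u (Ioi 0)) :
    ∃ z ∈ Ioo (2 / q) (2 * q), distanceEquation m b q C u z = 0 := by
  have hq₀ : 0 < q := by linarith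
  have hlo : 0 < 2 / q := by positivity
  have hhi : 0 < 2 * q := by positivity
  have hlohi : 2 / q ≤ 2 * q := by
    rw [div_le_iff₀ hq₀]; nlinarith
  have hE : ∀ z, 0 < z → 0 < meanIntensity C u z := fun z hz =>
    meanIntensity_pos ((one_div_pos.2 hq₀).trans (hu z hz).1) (hu z hz).2.le
  have hcont : ContinuousOn (distanceEquation m b q C u) (Icc (2 / q) (2 * q)) := by
    have hu' : ContinuousOn u (Icc (2 / q) (2 * q)) :=
      hu_cont.mono fun z hz => hlo.trans_le hz.1
    unfold distanceEquation meanIntensity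
    fun_prop
  have hneg : distanceEquation m b q C u (2 / q) < 0 := by
    have hs : 2 / q * u (2 / q) < 2 / q := mul_lt_of_lt_one_right hlo (hu _ hlo).2
    have hqs : q * (2 / q * u (2 / q)) < 2 :=
      calc q * (2 / q * u (2 / q)) < q * (2 / q) := mul_lt_mul_of_pos_left hs hq₀
        _ = 2 := mul_div_cancel₀ 2 hq₀.ne'
    have hlo₂ : 2 / q < 2 := by rw [div_lt_iff₀ hq₀]; linarith
    unfold distanceEquation
    nlinarith [mul_pos (mul_pos hm (hE _ hlo)) (sub_pos.2 (hs.trans hlo₂))]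
  have hpos : 0 < distanceEquation m b q C u (2 * q) := by
    have hu₁ := (hu _ hhi).1
    have hs : 2 < 2 * q * u (2 * q) := by
      rw [div_lt_iff₀ hq₀] at hu₁; nlinarith
    unfold distanceEquation
    nlinarith [mul_pos (mul_pos hm (hE _ hhi)) (sub_pos.2 hs),
      mul_pos (sub_pos.2 hq) (two_pos.trans hs)]
  exact intermediate_value_Ioo hlohi hcont ⟨hneg, hpos⟩

theorem existsUnique_distanceEquation_root (hm : 0 < m) (hb : 0 < b) (hq : 1 < q)
    (hu : ∀ z, 0 < z → u z ∈ Ioo (1 / q) 1) (hu_mono : MonotoneOn u (Ioi 0))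
    (hu_cont : ContinuousOn u (Ioi 0)) :
    (∃! z, 0 < z ∧ distanceEquation m b q C u z = 0) ∧
      ∀ z, 0 < z → distanceEquation m b q C u z = 0 → 2 / q < z ∧ z < 2 * q := by
  obtain ⟨z, hz, hroot⟩ := exists_distanceEquation_root (C := C) hm hb hq hu hu_cont
  have hz₀ : 0 < z := (div_pos two_pos (by linarith)).trans hz.1
  refine ⟨⟨z, ⟨hz₀, hroot⟩, fun y hy => ?_⟩,
    fun y hy => distanceEquation_root_mem_Ioo hm hb hq hu hy⟩
  exact distanceEquation_injOn_roots hm hb hq hu hu_mono hy.1 hz₀ hy.2 hroot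

end Equation

section Weights

noncomputable def weightRatio (c C z : ℝ) : ℝ :=
  (1 + c * exp C) / (1 + c * exp (C - z))

/-- `w_p*` as a function of `r = weightRatio (m / b) C z`. -/
noncomputable def supportWeight (P r : ℝ) : ℝ :=
  2 / (P + √((P - 2) ^ 2 + 4 * (P - 1) * r))

variable {c C P : ℝ}

lemma weightRatio_zero (hc : 0 ≤ c) : weightRatio c C 0 = 1 := by
  rw [weightRatio, sub_zero, div_self (by positivity)]

lemma weightRatio_nonneg (hc : 0 ≤ c) (z : ℝ) : 0 ≤ weightRatio c C z := by
  unfold weightRatio; positivity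

lemma strictMono_weightRatio (hc : 0 < c) : StrictMono (weightRatio c C) := fun z₁ z₂ h =>
  div_lt_div_of_pos_left (by positivity) (by positivity) (by gcongr)

lemma continuous_weightRatio (hc : 0 ≤ c) : Continuous (weightRatio c C) := by
  unfold weightRatio
  exact continuous_const.div (by fun_prop) fun z => by positivity

lemma supportWeight_pos (hP : 0 < P) (r : ℝ) : 0 < supportWeight P r := by
  unfold supportWeight; positivity

lemma supportWeight_one (hP : 0 ≤ P) : supportWeight P 1 = 1 / P := by
  have hsq : (P - 2) ^ 2 + 4 * (P - 1) * 1 = P ^ 2 := by ring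
  rw [supportWeight, hsq, sqrt_sq hP, ← two_mul, div_mul_cancel_left₀ two_ne_zero, one_div]

lemma strictAntiOn_supportWeight (hP : 1 < P) : StrictAntiOn (supportWeight P) (Ici 0) := by
  intro r₁ hr₁ r₂ hr₂ h
  have hrad : 0 ≤ (P - 2) ^ 2 + 4 * (P - 1) * r₁ := by
    have : 0 ≤ (P - 1) * r₁ := mul_nonneg (by linarith) hr₁
    nlinarith [sq_nonneg (P - 2)]
  have hsqrt : √((P - 2) ^ 2 + 4 * (P - 1) * r₁) < √((P - 2) ^ 2 + 4 * (P - 1) * r₂) :=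
    sqrt_lt_sqrt hrad (by nlinarith)
  exact div_lt_div_of_pos_left two_pos (by positivity) (by linarith)

lemma continuous_supportWeight (hP : 0 < P) : Continuous (supportWeight P) := by
  unfold supportWeight
  exact continuous_const.div (by fun_prop) fun r => by positivity

lemma strictAnti_supportWeight_weightRatio (hP : 1 < P) (hc : 0 < c) :
    StrictAnti fun z => supportWeight P (weightRatio c C z) := fun _ _ h =>
  strictAntiOn_supportWeight hP (weightRatio_nonneg hc.le _) (weightRatio_nonneg hc.le _)
    (strictMono_weightRatio hc h)

lemma supportWeight_weightRatio_lt (hP : 1 < P) (hc : 0 < c) {z : ℝ} (hz : 0 < z) :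
    supportWeight P (weightRatio c C z) < 1 / P := by
  have : supportWeight P (weightRatio c C z) < supportWeight P (weightRatio c C 0) :=
    strictAnti_supportWeight_weightRatio hP hc hz
  rwa [weightRatio_zero hc.le, supportWeight_one (by linarith)] at this

lemma one_sub_supportWeight_weightRatio_mem_Ioo (hP : 1 < P) (hc : 0 < c) {z : ℝ}
    (hz : 0 < z) : 1 - supportWeight P (weightRatio c C z) ∈ Ioo (1 / (P / (P - 1))) 1 := by
  have hlt := supportWeight_weightRatio_lt (C := C) hP hc hz
  have hpos := supportWeight_pos (P := P) (by linarith) (weightRatio c C z)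
  rw [lt_div_iff₀ (by linarith)] at hlt
  rw [one_div_div, mem_Ioo, div_lt_iff₀ (by linarith)]
  constructor <;> nlinarith

end Weights

lemma poissonGamma_rhs_eq_distanceEquation (m b P C w w₁ z : ℝ) (hP : P - 1 ≠ 0)
    (hw₁ : w₁ = (1 - w) / (P - 1)) :
    m * ((P - 1) * w₁ * exp (C - z) + w * exp C) * (z * (P - 1) * w₁ - 2)
      + b * (z * P * w₁ - 2) = distanceEquation m b (P / (P - 1)) C (fun _ => 1 - w) z := by
  subst hw₁
  simp only [distanceEquation, meanIntensity]
  field_simp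
  ring

/-- The equation determining the optimal distance `z*` for the D-optimal design of the
Poisson-Gamma model has a unique solution in `(0,∞)`, and this solution satisfies
`2(p−1)/p < z* < 2p/(p−1)`. -/
theorem D_optimal_distance_poisson_gamma
    (b m : ℝ) (hb : 0 < b) (hm : 0 < m)
    (p : ℕ) (hp : 2 ≤ p) (C : ℝ)
    (wpf w1f : ℝ → ℝ)
    (hwpf : ∀ z, wpf z = 2 / ((p : ℝ) + Real.sqrt (((p : ℝ) - 2) ^ 2 +
      4 * ((p : ℝ) - 1) *
        ((1 + (m / b) * Real.exp C) / (1 + (m / b) * Real.exp (C - z))))))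
    (hw1f : ∀ z, w1f z = (1 - wpf z) / ((p : ℝ) - 1)) :
    (∃! z : ℝ, 0 < z ∧
      0 = m * (((p : ℝ) - 1) * w1f z * Real.exp (C - z) + wpf z * Real.exp C) *
            (z * ((p : ℝ) - 1) * w1f z - 2)
          + b * (z * (p : ℝ) * w1f z - 2)) ∧
    ∀ z : ℝ, 0 < z →
      0 = m * (((p : ℝ) - 1) * w1f z * Real.exp (C - z) + wpf z * Real.exp C) *
            (z * ((p : ℝ) - 1) * w1f z - 2)
          + b * (z * (p : ℝ) * w1f z - 2) →
      2 * ((p : ℝ) - 1) / (p : ℝ) < z ∧ z < 2 * (p : ℝ) / ((p : ℝ) - 1) := by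
  have hP : (1 : ℝ) < p := by exact_mod_cast hp
  have hc : 0 < m / b := div_pos hm hb
  have hwpf' : wpf = fun z => supportWeight p (weightRatio (m / b) C z) := funext hwpf
  set u : ℝ → ℝ := fun z => 1 - wpf z
  have hu : ∀ z, 0 < z → u z ∈ Ioo (1 / ((p : ℝ) / (p - 1))) 1 := fun z hz => by
    simpa only [u, hwpf'] using one_sub_supportWeight_weightRatio_mem_Ioo hP hc hz
  have hu_mono : MonotoneOn u (Ioi 0) := fun z₁ _ z₂ _ h =>
    sub_le_sub_left (hwpf' ▸ (strictAnti_supportWeight_weightRatio hP hc).antitone h) 1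
  have hu_cont : Continuous u := by
    simp only [u, hwpf']
    exact continuous_const.sub
      ((continuous_supportWeight (by linarith)).comp (continuous_weightRatio hc.le))
  have heq : ∀ z, m * (((p : ℝ) - 1) * w1f z * Real.exp (C - z) + wpf z * Real.exp C) *
      (z * ((p : ℝ) - 1) * w1f z - 2) + b * (z * (p : ℝ) * w1f z - 2) =
      distanceEquation m b (p / (p - 1)) C u z := fun z =>
    poissonGamma_rhs_eq_distanceEquation m b p C (wpf z) (w1f z) z (by linarith) (hw1f z)
  have hlo : 2 / ((p : ℝ) / (p - 1)) = 2 * ((p : ℝ) - 1) / p := by field_simp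
  have hhi : 2 * ((p : ℝ) / (p - 1)) = 2 * (p : ℝ) / (p - 1) := mul_div_assoc' _ _ _
  simp_rw [heq, eq_comm (a := (0 : ℝ)), ← hlo, ← hhi]
  exact existsUnique_distanceEquation_root hm hb ((one_lt_div (by linarith)).2 (by linarith))
    hu hu_mono hu_cont.continuousOn
end

section
/- For z > 0 define w_p*(z) := 2 / ( p + √( (p−2)² + 4·(p−1)·e^{z} ) ). Then the equation z·(1 − w_p*(z)) = 2 has a unique solution z* in the interval (0,∞), and this solution satisfies 2 < z* < 2·p/(p−1). -/
open Real

/-- The equation `z·(1 − w_p*(z)) = 2`, with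
`w_p*(z) = 2/(p + √((p−2)² + 4(p−1)e^z))`, determining the optimal distance for the
`D_s`-optimal design in the Poisson model, has a unique solution `z*` in `(0,∞)`, and
this solution satisfies `2 < z* < 2p/(p−1)`. -/
theorem Ds_optimal_distance_poisson
    (p : ℕ) (hp : 2 ≤ p)
    (wpf : ℝ → ℝ)
    (hwpf : ∀ z, wpf z = 2 / ((p : ℝ) + Real.sqrt (((p : ℝ) - 2) ^ 2 +
      4 * ((p : ℝ) - 1) * Real.exp z))) :
    (∃! z : ℝ, 0 < z ∧ z * (1 - wpf z) = 2) ∧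
    ∀ z : ℝ, 0 < z → z * (1 - wpf z) = 2 →
      2 < z ∧ z < 2 * (p : ℝ) / ((p : ℝ) - 1) := by
  have hP : (2:ℝ) ≤ (p:ℝ) := by exact_mod_cast hp
  set P : ℝ := (p : ℝ) with hPdef
  have hs_nonneg : ∀ z : ℝ, 0 ≤ Real.sqrt ((P-2)^2 + 4*(P-1)*Real.exp z) :=
    fun z => Real.sqrt_nonneg _
  have hin_nonneg : ∀ z : ℝ, 0 ≤ (P-2)^2 + 4*(P-1)*Real.exp z := by
    intro z
    have := Real.exp_pos z
    nlinarith [sq_nonneg (P-2)]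
  have hw_pos : ∀ z : ℝ, 0 < wpf z := by
    intro z
    rw [hwpf]
    apply div_pos two_pos
    have := hs_nonneg z
    linarith
  have hs_gt : ∀ z : ℝ, 0 < z → P < Real.sqrt ((P-2)^2 + 4*(P-1)*Real.exp z) := by
    intro z hz
    rw [Real.lt_sqrt (by linarith)]
    have h1 : (1:ℝ) < Real.exp z := by
      have := Real.exp_lt_exp.mpr hz
      simpa using this
    nlinarith
  -- `P * wpf z < 1` for `z > 0`
  have hPw : ∀ z : ℝ, 0 < z → P * wpf z < 1 := by
    intro z hz
    rw [hwpf]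
    have hs := hs_gt z hz
    rw [show P * (2 / (P + Real.sqrt ((P-2)^2 + 4*(P-1)*Real.exp z))) =
      2 * P / (P + Real.sqrt ((P-2)^2 + 4*(P-1)*Real.exp z)) by ring,
      div_lt_one (by linarith)]
    linarith
  have hw_half : ∀ z : ℝ, 0 < z → wpf z < 1/2 := by
    intro z hz
    have h := hPw z hz
    have h2 := hw_pos z
    nlinarith
  -- strict monotonicity
  have hmono : ∀ a b : ℝ, 0 < a → a < b → a * (1 - wpf a) < b * (1 - wpf b) := by
    intro a b ha hab
    have hb : 0 < b := ha.trans hab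
    have hsab : Real.sqrt ((P-2)^2 + 4*(P-1)*Real.exp a)
        < Real.sqrt ((P-2)^2 + 4*(P-1)*Real.exp b) := by
      apply Real.sqrt_lt_sqrt (hin_nonneg a)
      have := Real.exp_lt_exp.mpr hab
      nlinarith
    have hwba : wpf b < wpf a := by
      rw [hwpf, hwpf]
      apply div_lt_div_of_pos_left two_pos
      · have := hs_nonneg a; linarith
      · linarith
    have h1 : wpf a < 1/2 := hw_half a ha
    have h2 : 0 < wpf b := hw_pos b
    nlinarith
  -- continuity
  have hcont : Continuous (fun z => z * (1 - wpf z)) := by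
    have heq : (fun z => z * (1 - wpf z))
        = fun z => z * (1 - 2 / (P + Real.sqrt ((P-2)^2 + 4*(P-1)*Real.exp z))) := by
      funext z; rw [hwpf]
    rw [heq]
    apply continuous_id.mul
    apply continuous_const.sub
    apply Continuous.div continuous_const
    · exact continuous_const.add ((Real.continuous_sqrt).comp (by continuity))
    · intro z
      have := hs_nonneg z
      positivity
  set B : ℝ := 2 * P / (P - 1) with hBdef
  have hBP : B * (P - 1) = 2 * P := by
    have h1 : P - 1 ≠ 0 := by linarith
    rw [hBdef]; field_simp
  have hB2 : 2 < B := by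
    rw [hBdef, lt_div_iff₀ (by linarith)]
    linarith
  have hB0 : 0 < B := by linarith
  -- bounds for any solution
  have hbounds : ∀ z : ℝ, 0 < z → z * (1 - wpf z) = 2 → 2 < z ∧ z < B := by
    intro z hz heq
    have h1 : 0 < wpf z := hw_pos z
    have h2 : P * wpf z < 1 := hPw z hz
    constructor
    · nlinarith
    · have hzP : z * (P - 1) < 2 * P := by nlinarith
      rw [hBdef, lt_div_iff₀ (by linarith)]
      linarith
  -- existence via IVT
  have hg2 : 2 * (1 - wpf 2) < 2 := by
    have := hw_pos 2; nlinarith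
  have hgB : 2 < B * (1 - wpf B) := by
    have h2 : P * wpf B < 1 := hPw B hB0
    nlinarith [mul_lt_mul_of_pos_left h2 hB0]
  obtain ⟨z, hzmem, hz'⟩ :=
    intermediate_value_Icc (le_of_lt hB2) hcont.continuousOn ⟨le_of_lt hg2, le_of_lt hgB⟩
  have hz : z * (1 - wpf z) = 2 := hz'
  have hz0 : 0 < z := lt_of_lt_of_le two_pos hzmem.1
  refine ⟨⟨z, ⟨hz0, hz⟩, ?_⟩, fun y hy hyeq => by
    have := hbounds y hy hyeq
    exact ⟨this.1, by rw [hBdef] at this; exact this.2⟩⟩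
  rintro y ⟨hy0, hyeq⟩
  rcases lt_trichotomy y z with h | h | h
  · exfalso; have := hmono y z hy0 h; rw [hyeq, hz] at this; linarith
  · exact h
  · exfalso; have := hmono z y hz0 h; rw [hyeq, hz] at this; linarith
end

section
/- Let A be a p×s real matrix with rank(A) = s whose first row is zero, i.e. Aᵀe₁ = 0 (in block form Aᵀ = (0_s, Ã) with à an s×(p−1) matrix of rank s). Then for every p×p real matrix G: det( Aᵀ·( (b/a)·G + (m/a)·e₁e₁ᵀ )·A ) = (b/a)^s · det( Aᵀ·G·A ). In particular, combined with the fact that (b/a)·G + (m/a)·e₁e₁ᵀ is a generalized inverse of the Poisson-Gamma information matrix M exactly when G is a generalized inverse of M_Po, the D_A-optimality criterion functions of the Poisson model and the Poisson-Gamma model are proportional, so a design is D_A-optimal in the Poisson-Gamma model if and only if it is D_A-optimal in the Poisson model. -/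
open Matrix Real Finset

/-- The `D_A`-optimality criterion functions of the Poisson and the Poisson-Gamma model
are proportional: if the first row of `A` vanishes (`Aᵀe₁ = 0`), then for every matrix
`G`, `det(Aᵀ·((b/a)·G + (m/a)·e₁e₁ᵀ)·A) = (b/a)^s · det(Aᵀ·G·A)`. -/
theorem DA_criterion_proportional
    (a b m : ℝ) (ha : 0 < a) (hb : 0 < b) (hm : 0 < m)
    (p s : ℕ) (hp : 1 ≤ p) (hs : s ≤ p)
    (e1 : Fin p → ℝ) (he1 : e1 = fun i : Fin p => if (i : ℕ) = 0 then (1:ℝ) else 0)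
    (A : Matrix (Fin p) (Fin s) ℝ) (hrank : A.rank = s)
    (hA : Aᵀ *ᵥ e1 = 0) :
    ∀ G : Matrix (Fin p) (Fin p) ℝ,
      (Aᵀ * ((b / a) • G + (m / a) • Matrix.vecMulVec e1 e1) * A).det
        = (b / a) ^ s * (Aᵀ * G * A).det := by
  intro G
  have key : Aᵀ * Matrix.vecMulVec e1 e1 = 0 := by
    ext i j
    have h := congrFun hA i
    simp only [Matrix.mulVec, dotProduct, Pi.zero_apply] at h
    simp only [Matrix.mul_apply, Matrix.vecMulVec_apply, Matrix.zero_apply]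
    calc ∑ k, Aᵀ i k * (e1 k * e1 j) = (∑ k, Aᵀ i k * e1 k) * e1 j := by
          rw [Finset.sum_mul]; congr 1; ext k; ring
      _ = 0 := by rw [h]; ring
  rw [Matrix.mul_add, Matrix.mul_smul, Matrix.mul_smul, key, smul_zero, add_zero,
    Matrix.smul_mul, Matrix.det_smul, Fintype.card_fin]
end
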